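/- A Pauli operator P = ∏_{u ∈ A} X_u · ∏_{v ∈ B} Z_v (with A, B ⊆ V) stabilizes the graph state E_G |+⟩^{⊗V} up to sign if and only if B = Odd(A); i.e. P |G⟩ = ± |G⟩ implies B = Odd(A), and conversely B = Odd(A) implies P |G⟩ = ± |G⟩. -/

import Mathlib

open Finset

variable {V : Type*} [Fintype V] [DecidableEq V]

/-- The diagonal coefficient of `E_G = ∏_{(i,j) ∈ E(G)} CZ_{ij}` on the computational
basis state `x : V → Fin 2`: a factor `−1` for every edge both of whose endpoints are
in state `|1⟩`. -/
noncomputable def egCoef (G : SimpleGraph V) [DecidableRel G.Adj] (x : V → Fin 2) : ℂ :=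
  ∏ e ∈ G.edgeFinset,
    Sym2.lift ⟨fun i j => if x i = 1 ∧ x j = 1 then (-1 : ℂ) else 1,
      fun i j => by by_cases h : x i = 1 <;> by_cases h' : x j = 1 <;> simp [h, h']⟩ e

/-- The entangling operator `E_G` acting on states (functions on the computational basis). -/
noncomputable def egOp (G : SimpleGraph V) [DecidableRel G.Adj]
    (ψ : (V → Fin 2) → ℂ) : (V → Fin 2) → ℂ :=
  fun x => egCoef G x * ψ x

/-- `∏_{v ∈ S} Z_v` acting on states. -/
noncomputable def zOp (S : Finset V) (ψ : (V → Fin 2) → ℂ) : (V → Fin 2) → ℂ :=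
  fun x => (-1 : ℂ) ^ (S.filter fun v => x v = 1).card * ψ x

/-- Bit flip on the set `S`. -/
def flipS (S : Finset V) (x : V → Fin 2) : V → Fin 2 :=
  fun v => if v ∈ S then x v + 1 else x v

/-- `∏_{v ∈ S} X_v` acting on states. -/
def xOp (S : Finset V) (ψ : (V → Fin 2) → ℂ) : (V → Fin 2) → ℂ :=
  fun x => ψ (flipS S x)

/-- The state `|+⟩^{⊗V}`. -/
noncomputable def plusState : (V → Fin 2) → ℂ :=
  fun _ => ((Real.sqrt 2 : ℂ))⁻¹ ^ Fintype.card V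
/-- The odd neighborhood `Odd(A) = {v : |N_G(v) ∩ A| is odd}`. -/
def oddNbhd (G : SimpleGraph V) [DecidableRel G.Adj] (K : Finset V) : Finset V :=
  Finset.univ.filter fun u => (G.neighborFinset u ∩ K).card % 2 = 1

/-! Indexing basis states by `x ∈ 𝔽₂^V`, the amplitudes of `|G⟩` are `(-1)^{Q(x)}` up to a
common positive factor, where `Q(x) = ∑_{ij ∈ E(G)} x_i x_j`. Polarizing,
`Q(x + a) = Q(x) + Q(a) + ⟨x, Adj · a⟩`, and `Adj · 1_A = 1_{Odd(A)}`. Hence `P|G⟩` is `|G⟩`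
multiplied pointwise by `(-1)^{c + ⟨x, 1_B + 1_{Odd(A)}⟩}` for a constant `c`. As no amplitude
of `|G⟩` vanishes, this is a global sign exactly when the linear part `1_B + 1_{Odd(A)}` is
zero, i.e. when `B = Odd(A)`. -/

open Fin.CommRing Matrix

def signChar : AddChar (Fin 2) ℂ where
  toFun a := (-1) ^ (a : ℕ)
  map_zero_eq_one' := pow_zero _
  map_add_eq_mul' a b := by fin_cases a <;> fin_cases b <;> norm_num

lemma signChar_eq_one_or_neg_one (a : Fin 2) : signChar a = 1 ∨ signChar a = -1 := by
  fin_cases a <;> simp [signChar]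

lemma signChar_ne_zero (a : Fin 2) : signChar a ≠ 0 := by
  rcases signChar_eq_one_or_neg_one a with h | h <;> simp [h]

lemma signChar_injective : Function.Injective signChar := by
  intro a b h
  fin_cases a <;> fin_cases b <;> first | rfl | norm_num [signChar] at h

lemma signChar_natCast (n : ℕ) : signChar n = (-1) ^ n := by
  rw [signChar, AddChar.coe_mk, Fin.val_natCast, neg_one_pow_eq_pow_mod_two (R := ℂ) (n := n)]

lemma signChar_sum {ι : Type*} (s : Finset ι) (f : ι → Fin 2) :
    signChar (∑ i ∈ s, f i) = ∏ i ∈ s, signChar (f i) := by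
  induction s using Finset.cons_induction with
  | empty => exact AddChar.map_zero_eq_one _
  | cons a s ha ih => rw [sum_cons, prod_cons, AddChar.map_add_eq_mul, ih]

namespace SimpleGraph

variable (G : SimpleGraph V) [DecidableRel G.Adj]

lemma sum_darts_eq_sum_edgeFinset {M : Type*} [AddCommMonoid M] (f : V → V → M) :
    ∑ d : G.Dart, f d.fst d.snd =
      ∑ e ∈ G.edgeFinset, Sym2.lift ⟨fun i j => f i j + f j i, fun _ _ => add_comm _ _⟩ e := by
  rw [← sum_fiberwise_of_maps_to (g := Dart.edge) (t := G.edgeFinset)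
    fun d _ => G.mem_edgeFinset.mpr d.edge_mem]
  refine sum_congr rfl fun e he => ?_
  induction e using Sym2.ind with
  | _ i j =>
    let d : G.Dart := ⟨(i, j), G.mem_edgeFinset.mp he⟩
    rw [show ({d' : G.Dart | d'.edge = s(i, j)} : Finset _) = {d, d.symm} from d.edge_fiber,
      sum_pair d.symm_ne.symm]
    rfl

lemma sum_darts_eq_sum_neighborFinset {M : Type*} [AddCommMonoid M] (f : V → V → M) :
    ∑ d : G.Dart, f d.fst d.snd = ∑ v, ∑ w ∈ G.neighborFinset v, f v w := by
  rw [← sum_fiberwise_of_maps_to (g := fun d : G.Dart => d.fst) (t := univ)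
    fun _ _ => mem_univ _]
  refine sum_congr rfl fun v _ => ?_
  rw [dart_fst_fiber, sum_image fun _ _ _ _ h => G.dartOfNeighborSet_injective v h]
  exact (sum_subtype _ (fun w => G.mem_neighborFinset v w) (f v)).symm

def edgeQuadForm (x : V → Fin 2) : Fin 2 :=
  ∑ e ∈ G.edgeFinset, Sym2.lift ⟨fun i j => x i * x j, fun _ _ => mul_comm _ _⟩ e

lemma edgeQuadForm_add (x y : V → Fin 2) :
    G.edgeQuadForm (x + y) =
      G.edgeQuadForm x + G.edgeQuadForm y + x ⬝ᵥ (G.adjMatrix (Fin 2) *ᵥ y) := by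
  have hcross : ∑ e ∈ G.edgeFinset,
      Sym2.lift ⟨fun i j => x i * y j + x j * y i, fun _ _ => add_comm _ _⟩ e =
        x ⬝ᵥ (G.adjMatrix (Fin 2) *ᵥ y) := by
    calc _ = ∑ d : G.Dart, x d.fst * y d.snd :=
          (G.sum_darts_eq_sum_edgeFinset fun i j => x i * y j).symm
      _ = ∑ v, ∑ w ∈ G.neighborFinset v, x v * y w :=
          G.sum_darts_eq_sum_neighborFinset fun i j => x i * y j
      _ = x ⬝ᵥ (G.adjMatrix (Fin 2) *ᵥ y) := by
          simp only [dotProduct, adjMatrix_mulVec_apply, mul_sum]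
  rw [edgeQuadForm, edgeQuadForm, edgeQuadForm, ← hcross, ← sum_add_distrib, ← sum_add_distrib]
  refine sum_congr rfl fun e _ => ?_
  induction e using Sym2.ind with
  | _ i j => simp only [Sym2.lift_mk, Pi.add_apply]; ring

lemma adjMatrix_mulVec_indicator (A : Finset V) :
    G.adjMatrix (Fin 2) *ᵥ (A : Set V).indicator 1 = (oddNbhd G A : Set V).indicator 1 := by
  ext v
  rw [adjMatrix_mulVec_apply]
  simp only [Set.indicator_apply, mem_coe, Pi.one_apply, sum_boole, filter_mem_eq_inter,
    oddNbhd, mem_filter, mem_univ, true_and, ← Nat.odd_iff, CharTwo.natCast_eq_ite,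
    ← Nat.not_even_iff_odd, ite_not]

lemma egCoef_eq_signChar {V : Type*} [Fintype V] (G : SimpleGraph V) [DecidableRel G.Adj]
    (x : V → Fin 2) : egCoef G x = signChar (G.edgeQuadForm x) := by
  rw [egCoef, edgeQuadForm, signChar_sum]
  refine prod_congr rfl fun e _ => ?_
  induction e using Sym2.ind with
  | _ i j =>
    simp only [Sym2.lift_mk]
    generalize x i = a; generalize x j = b
    fin_cases a <;> fin_cases b <;> simp [signChar]

end SimpleGraph

lemma zOp_apply {V : Type*} [Fintype V] (S : Finset V) (ψ : (V → Fin 2) → ℂ) (x : V → Fin 2) :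
    zOp S ψ x = signChar (x ⬝ᵥ (S : Set V).indicator 1) * ψ x := by
  have hcount : x ⬝ᵥ (S : Set V).indicator 1 = (#{v ∈ S | x v = 1} : ℕ) := by
    classical
    simp only [natCast_card_filter, dotProduct, Set.indicator_apply, mem_coe, Pi.one_apply,
      mul_ite, mul_one, mul_zero, sum_ite_mem, univ_inter]
    refine sum_congr rfl fun v _ => ?_
    generalize x v = a
    fin_cases a <;> rfl
  rw [zOp, hcount, signChar_natCast]

lemma flipS_eq_add {V : Type*} [DecidableEq V] (S : Finset V) (x : V → Fin 2) :
    flipS S x = x + (S : Set V).indicator 1 := by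
  ext v
  by_cases hv : v ∈ S <;> simp [flipS, hv]

lemma plusState_ne_zero {V : Type*} [Fintype V] (x : V → Fin 2) : plusState x ≠ 0 :=
  pow_ne_zero _ (inv_ne_zero (by exact_mod_cast Real.sqrt_ne_zero'.mpr two_pos))

lemma xOp_zOp_graphState_apply (G : SimpleGraph V) [DecidableRel G.Adj] (A B : Finset V)
    (x : V → Fin 2) :
    xOp A (zOp B (egOp G plusState)) x =
      signChar ((A : Set V).indicator 1 ⬝ᵥ (B : Set V).indicator 1 +
          G.edgeQuadForm ((A : Set V).indicator 1) +
          x ⬝ᵥ ((B : Set V).indicator 1 + (oddNbhd G A : Set V).indicator 1)) *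
        egOp G plusState x := by
  simp only [xOp, egOp, plusState, zOp_apply, G.egCoef_eq_signChar, flipS_eq_add,
    G.edgeQuadForm_add, G.adjMatrix_mulVec_indicator]
  rw [← mul_assoc, ← mul_assoc, ← AddChar.map_add_eq_mul, ← AddChar.map_add_eq_mul]
  congr 2
  simp only [add_dotProduct, dotProduct_add]
  ring

lemma exists_sign_smul_eq_signChar_affine_mul_iff {ι : Type*} [Fintype ι] (c : Fin 2)
    (w : ι → Fin 2) {ψ : (ι → Fin 2) → ℂ} (hψ : ∀ x, ψ x ≠ 0) :
    (∃ ε : ℂ, (ε = 1 ∨ ε = -1) ∧ (fun x => signChar (c + x ⬝ᵥ w) * ψ x) = ε • ψ) ↔ w = 0 := by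
  constructor
  · rintro ⟨ε, -, h⟩
    have hε (x : ι → Fin 2) : signChar (c + x ⬝ᵥ w) = ε :=
      mul_right_cancel₀ (hψ x) (congrFun h x)
    refine dotProduct_eq_zero_iff.mp fun x => ?_
    have hlin := signChar_injective ((hε x).trans (hε 0).symm)
    rwa [zero_dotProduct, add_zero, add_eq_left, dotProduct_comm] at hlin
  · rintro rfl
    exact ⟨signChar c, signChar_eq_one_or_neg_one c, funext fun x => by simp⟩

lemma indicator_add_indicator_eq_zero_iff {V : Type*} (S T : Finset V) :
    (S : Set V).indicator (1 : V → Fin 2) + (T : Set V).indicator 1 = 0 ↔ S = T := by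
  rw [add_eq_zero_iff_eq_neg, show -(T : Set V).indicator (1 : V → Fin 2) = (T : Set V).indicator 1
    from funext fun _ => CharTwo.neg_eq _]
  exact ⟨fun h => coe_injective (Set.indicator_one_inj (Fin 2) h), fun h => h ▸ rfl⟩

/-- A Pauli operator `P = ∏_{u ∈ A} X_u · ∏_{v ∈ B} Z_v` stabilizes the graph state
`|G⟩ = E_G |+⟩^{⊗V}` up to sign if and only if `B = Odd(A)`. -/
theorem pauli_stabilizes_graphState_iff (G : SimpleGraph V) [DecidableRel G.Adj]
    (A B : Finset V) :
    (∃ ε : ℂ, (ε = 1 ∨ ε = -1) ∧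
      xOp A (zOp B (egOp G plusState)) = ε • egOp G plusState) ↔ B = oddNbhd G A := by
  have hψ (x : V → Fin 2) : egOp G plusState x ≠ 0 := by
    rw [egOp, G.egCoef_eq_signChar]
    exact mul_ne_zero (signChar_ne_zero _) (plusState_ne_zero x)
  rw [funext (xOp_zOp_graphState_apply G A B),
    exists_sign_smul_eq_signChar_affine_mul_iff _ _ hψ, indicator_add_indicator_eq_zero_iff]
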